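/- (Minimality principle) Let μ₀ be a mass distribution on ℤ^d with finite support and κ > 0. Let T be any infinitive toppling sequence for BS(μ₀, κ) and let V₀ = ⋃_k V_k be the final set of visited sites along T. Then V₀ equals the intersection of all sets V ⊆ ℤ^d for which there exists a function u such that (V, u) is a stabilizing pair for BS(μ₀, κ). -/

import Mathlib

open Filter

namespace Sandpile

/-- Lattice sites of `ℤ^d`. -/
abbrev Site (d : ℕ) := Fin d → ℤ

/-- Two sites are neighbours iff their `ℓ¹`-distance equals `1`. -/
def nbr {d : ℕ} (x y : Site d) : Prop := (∑ i, |x i - y i|) = 1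

/-- The (combinatorial) boundary of a set `V ⊆ ℤ^d`. -/
def bdry {d : ℕ} (V : Set (Site d)) : Set (Site d) :=
  {x | x ∈ V ∧ ∃ y, nbr x y ∧ y ∉ V}

/-- The (combinatorial) interior of a set `V ⊆ ℤ^d`. -/
def intr {d : ℕ} (V : Set (Site d)) : Set (Site d) := V \ bdry V

/-- The discrete Laplacian `Δu(x) = (1/(2d)) ∑_{y ∼ x} (u y - u x)`; the `2d`
neighbours of `x` are exactly the points `x ± eᵢ`. -/
noncomputable def lap {d : ℕ} (u : Site d → ℝ) (x : Site d) : ℝ :=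
  (1 / (2 * (d : ℝ))) *
    ∑ i : Fin d, ((u (x + Pi.single i 1) - u x) + (u (x - Pi.single i 1) - u x))

/-- A mass distribution: nonnegative with finite support. -/
def IsMassDist {d : ℕ} (μ : Site d → ℝ) : Prop :=
  (∀ x, 0 ≤ μ x) ∧ (Function.support μ).Finite

/-- Euclidean norm of a lattice point. -/
noncomputable def enorm {d : ℕ} (x : Site d) : ℝ :=
  Real.sqrt (∑ i, ((x i : ℝ)) ^ 2)

/-- A configuration of the boundary sandpile: visited sites, current mass, odometer. -/
structure Config (d : ℕ) where
  V : Set (Site d)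
  μ : Site d → ℝ
  u : Site d → ℝ

/-- A site is unstable if it is a boundary site of the visited set carrying mass above
the capacity `κ`, or an interior site carrying positive mass. -/
def Unstable {d : ℕ} (κ : ℝ) (c : Config d) (x : Site d) : Prop :=
  (x ∈ bdry c.V ∧ κ < c.μ x) ∨ (x ∈ intr c.V ∧ 0 < c.μ x)

open Classical in
/-- Toppling the site `x`: if `x` is unstable, its mass is distributed equally among its
`2d` neighbours, the odometer at `x` increases by the toppled mass, and the neighbours
of `x` become visited; toppling a stable site changes nothing. -/
noncomputable def topple {d : ℕ} (κ : ℝ) (c : Config d) (x : Site d) : Config d :=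
  if Unstable κ c x then
    { V := c.V ∪ {y | nbr x y}
      μ := fun y => if y = x then 0 else
        if nbr x y then c.μ y + c.μ x / (2 * (d : ℝ)) else c.μ y
      u := fun y => if y = x then c.u y + c.μ y else c.u y }
  else c

/-- The evolution of the boundary sandpile `BS(μ₀, κ)` along a toppling sequence `T`:
start from `V₀ = supp μ₀`, `u₀ = 0`, and at step `k` topple the site `T k`. -/
noncomputable def evolve {d : ℕ} (κ : ℝ) (μ0 : Site d → ℝ) (T : ℕ → Site d) :
    ℕ → Config d
  | 0 => ⟨Function.support μ0, μ0, fun _ => 0⟩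
  | k + 1 => topple κ (evolve κ μ0 T k) (T k)

/-- A toppling sequence is infinitive if every site occurs in it infinitely often. -/
def Infinitive {d : ℕ} (T : ℕ → Site d) : Prop :=
  ∀ x : Site d, {k : ℕ | T k = x}.Infinite

/-- `(V, u)` is a stabilizing pair for `BS(μ₀, κ)`: `V` is finite, contains the support
of `μ₀`, and `u : ℤ^d → [0,∞)` vanishes outside the interior of `V`, satisfies
`Δu = -μ₀` on the interior of `V`, `u = 0` on `∂V`, and `μ₀ + Δu ≤ κ` on `∂V`. -/
def IsStabilizingPair {d : ℕ} (μ0 : Site d → ℝ) (κ : ℝ)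
    (V : Set (Site d)) (u : Site d → ℝ) : Prop :=
  V.Finite ∧ Function.support μ0 ⊆ V ∧ (∀ x, 0 ≤ u x) ∧
  (∀ x ∉ intr V, u x = 0) ∧
  (∀ x ∈ intr V, lap u x = -μ0 x) ∧
  (∀ x ∈ bdry V, u x = 0) ∧
  (∀ x ∈ bdry V, μ0 x + lap u x ≤ κ)

/-- *The* stabilizing pair of `BS(μ₀, κ)`: a stabilizing pair whose set of sites is
contained in the set of any other stabilizing pair. -/
def IsMinStabilizingPair {d : ℕ} (μ0 : Site d → ℝ) (κ : ℝ)
    (V : Set (Site d)) (u : Site d → ℝ) : Prop :=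
  IsStabilizingPair μ0 κ V u ∧
  ∀ V' u', IsStabilizingPair μ0 κ V' u' → V ⊆ V'

/-- The point mass `n·δ₀` at the origin. -/
def pointMass (d : ℕ) (n : ℝ) : Site d → ℝ := fun x => if x = 0 then n else 0

/-!
Along the toppling sequence the odometer `u_k` (the mass emitted so far by each site) is
nondecreasing and `μ_k = μ₀ + Δu_k`.

*Every stabilizing pair `(V, u)` dominates the process* (least action): inductively
`V_k ⊆ V` and `u_k ≤ u`. Indeed, at a toppled site `x` we have `-Δ(u - u_k)(x) ≤ (u - u_k)(x)`
because `u - u_k ≥ 0`, hence `μ_k(x) ≤ μ₀(x) + Δu(x) + u(x) - u_k(x)`. On `∂V` the right side is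
at most `κ`, so `x` cannot topple there; in the interior of `V` it gives `u_{k+1}(x) ≤ u(x)`.

*The process itself stabilizes to such a pair.* Mass is conserved, and a boundary site of `V_k`
outside `supp μ₀` has never toppled and so carries mass `> κ / 2d`; this bounds `|∂V_k|`, and
for `d ≥ 2` a finite set `W` has `|W| ≤ |∂W|^d` since every value of every coordinate on `W` is
also taken on `∂W`. So the visited sets are eventually constant, equal to some finite `V_∞`.
Green's identity against `‖x‖²` (whose Laplacian is `1`) bounds `∑ u_k` by the second moment of
the mass, so `u_k` increases to a limit `u_∞`. Since every site topples infinitely often, the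
limiting mass `μ₀ + Δu_∞` vanishes in the interior of `V_∞` and is at most `κ` on its boundary,
so `(V_∞, u_∞)` is itself a stabilizing pair.
-/

section Lattice

variable {d : ℕ}

theorem nbr_comm {x y : Site d} : nbr x y ↔ nbr y x := by
  simp only [nbr, abs_sub_comm (x _)]

theorem nbr_iff {x y : Site d} :
    nbr x y ↔ ∃ i, y = x + Pi.single i 1 ∨ y = x - Pi.single i 1 := by
  constructor
  · intro h
    set z := y - x with hz
    have hsum : ∑ j, |z j| = 1 := by
      rw [← h]; simp only [hz, Pi.sub_apply, abs_sub_comm (y _)]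
    obtain ⟨i, hi⟩ : ∃ i, z i ≠ 0 := by
      by_contra! h0
      simp [h0] at hsum
    rw [← Finset.add_sum_erase _ _ (Finset.mem_univ i)] at hsum
    have hrest : ∑ j ∈ Finset.univ.erase i, |z j| = 0 := by
      have := Finset.sum_nonneg fun j (_ : j ∈ Finset.univ.erase i) => abs_nonneg (z j)
      have := abs_pos.mpr hi
      omega
    have hzs : z = Pi.single i (z i) := by
      ext j
      rcases eq_or_ne j i with rfl | hj
      · simp
      · rw [Pi.single_eq_of_ne hj]
        exact abs_eq_zero.mp ((Finset.sum_eq_zero_iff_of_nonneg fun _ _ => abs_nonneg _).mp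
          hrest j (Finset.mem_erase.mpr ⟨hj, Finset.mem_univ j⟩))
    have hy : y = x + z := by simp [hz]
    refine ⟨i, ?_⟩
    rcases abs_eq zero_le_one |>.mp (show |z i| = 1 by omega) with h1 | h1
    · left; rw [hy, hzs, h1]
    · right; rw [hy, hzs, h1, Pi.single_neg, ← sub_eq_add_neg]
  · rintro ⟨i, rfl | rfl⟩ <;>
      simp [nbr, Pi.single_apply, apply_ite]

theorem setOf_nbr_finite (x : Site d) : {y | nbr x y}.Finite := by
  refine (Set.finite_iUnion fun i : Fin d =>
    ((Set.finite_singleton (x - Pi.single i 1)).insert (x + Pi.single i 1))).subset ?_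
  intro y hy
  obtain ⟨i, hi⟩ := nbr_iff.mp hy
  exact Set.mem_iUnion.mpr ⟨i, hi⟩

theorem mem_intr_iff {V : Set (Site d)} {x : Site d} :
    x ∈ intr V ↔ x ∈ V ∧ ∀ y, nbr x y → y ∈ V := by
  simp [intr, bdry]

theorem intr_mono {V W : Set (Site d)} (h : V ⊆ W) : intr V ⊆ intr W := fun _ hx =>
  mem_intr_iff.mpr ⟨h (mem_intr_iff.mp hx).1, fun y hy => h ((mem_intr_iff.mp hx).2 y hy)⟩


theorem exists_mem_bdry_apply_eq (hd : 2 ≤ d) (W : Finset (Site d)) {x : Site d} (hx : x ∈ W)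
    (i : Fin d) : ∃ y ∈ bdry (W : Set (Site d)), y i = x i := by
  have : Nontrivial (Fin d) := Fin.nontrivial_iff_two_le.mpr hd
  obtain ⟨j, hji⟩ := exists_ne i
  -- the last point of `W` on the line through `x` in direction `j`
  let L := W.filter fun y => ∀ t, t ≠ j → y t = x t
  obtain ⟨y, hyL, hymax⟩ := L.exists_max_image (· j) ⟨x, by simp [L, hx]⟩
  obtain ⟨hyW, hyx⟩ := Finset.mem_filter.mp hyL
  refine ⟨y, ⟨hyW, y + Pi.single j 1, nbr_iff.mpr ⟨j, Or.inl rfl⟩, fun hout => ?_⟩, hyx i hji.symm⟩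
  have := hymax _ (Finset.mem_filter.mpr ⟨hout, fun t ht => by simp [ht, hyx t ht]⟩)
  simp at this

theorem card_le_card_pow_of_bdry_subset (hd : 2 ≤ d) {W B : Finset (Site d)}
    (hB : bdry (W : Set (Site d)) ⊆ B) : W.card ≤ B.card ^ d := by
  have hW : W ⊆ Fintype.piFinset fun i => B.image (· i) := by
    intro x hx
    rw [Fintype.mem_piFinset]
    intro i
    obtain ⟨y, hy, hyx⟩ := exists_mem_bdry_apply_eq hd W hx i
    exact Finset.mem_image.mpr ⟨y, hB hy, hyx⟩
  calc W.card ≤ ∏ i, (B.image (· i)).card := by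
        simpa only [Fintype.card_piFinset] using Finset.card_le_card hW
    _ ≤ ∏ _i : Fin d, B.card := Finset.prod_le_prod' fun i _ => Finset.card_image_le
    _ = B.card ^ d := by simp

end Lattice

section Laplacian

variable {d : ℕ}

theorem single_one_injective : Function.Injective fun i : Fin d => (Pi.single i 1 : Site d) := by
  intro i j h
  have := congrFun h i
  by_contra hij
  simp [hij] at this

theorem single_one_ne_neg (i j : Fin d) : (Pi.single i 1 : Site d) ≠ -Pi.single j 1 := by
  intro h
  have := congrFun h i
  simp only [Pi.single_eq_same, Pi.neg_apply, Pi.single_apply] at this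
  split_ifs at this; omega

theorem not_nbr_self (x : Site d) : ¬ nbr x x := by simp [nbr]

open Classical in
theorem sum_single_add_sub_single (x y : Site d) (m : ℝ) :
    ∑ i, ((Pi.single x m : Site d → ℝ) (y + Pi.single i 1) +
      (Pi.single x m : Site d → ℝ) (y - Pi.single i 1)) = if nbr x y then m else 0 := by
  have hP : ∀ s : Site d, (Pi.single x m : Site d → ℝ) (y + s) =
      if s = x - y then m else 0 := fun s => by
    simp only [Pi.single_apply, eq_sub_iff_add_eq']
  simp only [sub_eq_add_neg y, hP]
  split_ifs with h
  · obtain ⟨j, hj | hj⟩ := nbr_iff.mp (nbr_comm.mp h) <;> subst hj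
    · simp [single_one_injective.eq_iff, (single_one_ne_neg _ _).symm]
    · simp [single_one_injective.eq_iff, single_one_ne_neg]
  · refine Finset.sum_eq_zero fun i _ => ?_
    have hx : x - y ≠ Pi.single i 1 := fun hi => h (nbr_comm.mpr (nbr_iff.mpr ⟨i, Or.inl
      (by rw [← hi]; abel)⟩))
    have hx' : x - y ≠ -Pi.single i 1 := fun hi => h (nbr_comm.mpr (nbr_iff.mpr ⟨i, Or.inr
      (by rw [sub_eq_add_neg, ← hi]; abel)⟩))
    simp [hx.symm, hx'.symm]

theorem lap_eq (hd : 0 < d) (u : Site d → ℝ) (x : Site d) :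
    lap u x = (2 * d : ℝ)⁻¹ * ∑ i, (u (x + Pi.single i 1) + u (x - Pi.single i 1)) - u x := by
  have : (d : ℝ) ≠ 0 := by positivity
  simp only [lap, sub_add_sub_comm, Finset.sum_sub_distrib, Finset.sum_const, Finset.card_univ,
    Fintype.card_fin, nsmul_eq_mul]
  field_simp
  ring

theorem lap_add (u v : Site d → ℝ) (x : Site d) : lap (u + v) x = lap u x + lap v x := by
  simp only [lap, Pi.add_apply, ← mul_add, ← Finset.sum_add_distrib]
  congr 1; refine Finset.sum_congr rfl fun i _ => ?_; ring

theorem lap_sub (u v : Site d → ℝ) (x : Site d) : lap (u - v) x = lap u x - lap v x := by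
  simp only [lap, Pi.sub_apply, ← mul_sub, ← Finset.sum_sub_distrib]
  congr 1; refine Finset.sum_congr rfl fun i _ => ?_; ring

theorem lap_const (c : ℝ) (x : Site d) : lap (fun _ => c) x = 0 := by simp [lap]

open Classical in
theorem lap_single (hd : 0 < d) (x : Site d) (m : ℝ) (y : Site d) :
    lap (Pi.single x m) y = if y = x then -m else if nbr x y then m / (2 * d) else 0 := by
  rw [lap_eq hd, sum_single_add_sub_single]
  rcases eq_or_ne y x with rfl | hyx
  · simp [not_nbr_self]
  · simp only [Pi.single_apply, hyx, if_false, sub_zero]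
    split_ifs <;> simp [div_eq_inv_mul]

theorem neg_le_lap (hd : 0 < d) {w : Site d → ℝ} (hw : ∀ y, 0 ≤ w y) (x : Site d) :
    -w x ≤ lap w x := by
  rw [lap_eq hd]
  have := Finset.sum_nonneg fun i (_ : i ∈ Finset.univ) =>
    add_nonneg (hw (x + Pi.single i 1)) (hw (x - Pi.single i 1))
  have : (0 : ℝ) ≤ (2 * (d : ℝ))⁻¹ := by positivity
  nlinarith

noncomputable def normSq (x : Site d) : ℝ := ∑ i, (x i : ℝ) ^ 2

theorem normSq_nonneg (x : Site d) : 0 ≤ normSq x := Finset.sum_nonneg fun _ _ => sq_nonneg _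

theorem normSq_add_single_add_normSq_sub_single (x : Site d) (i : Fin d) :
    normSq (x + Pi.single i 1) + normSq (x - Pi.single i 1) = 2 * normSq x + 2 := by
  have h : ∀ j, ((x + Pi.single i 1 : Site d) j : ℝ) ^ 2 +
      ((x - Pi.single i 1 : Site d) j : ℝ) ^ 2 = 2 * (x j : ℝ) ^ 2 + if j = i then 2 else 0 :=
    fun j => by
      simp only [Pi.add_apply, Pi.sub_apply, Pi.single_apply]
      split_ifs <;> push_cast <;> ring
  simp only [normSq, ← Finset.sum_add_distrib, h]
  simp [Finset.sum_add_distrib, Finset.mul_sum]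

theorem lap_normSq (hd : 0 < d) (x : Site d) : lap normSq x = 1 := by
  have : (d : ℝ) ≠ 0 := by positivity
  simp only [lap_eq hd, normSq_add_single_add_normSq_sub_single, Finset.sum_const,
    Finset.card_univ, Fintype.card_fin, nsmul_eq_mul]
  field_simp
  ring

theorem finsum_sub_translate_mul {u : Site d → ℝ} (hu : u.HasFiniteSupport) (φ : Site d → ℝ)
    (a : Site d) : ∑ᶠ x, (u (x + a) - u x) * φ x = ∑ᶠ x, u x * (φ (x - a) - φ x) := by
  have hua : (fun x => u (x + a)).HasFiniteSupport := hu.comp_of_injective (add_left_injective a)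
  have hshift : ∑ᶠ x, u (x + a) * φ x = ∑ᶠ x, u x * φ (x - a) := by
    simpa using finsum_comp_equiv (Equiv.addRight a) (f := fun x => u x * φ (x - a))
  simp only [sub_mul, mul_sub]
  rw [finsum_sub_distrib (hua.fun_mul_left φ) (hu.fun_mul_left φ),
    finsum_sub_distrib (hu.fun_mul_left _) (hu.fun_mul_left φ), hshift]

theorem finsum_lap_mul {u : Site d → ℝ} (hu : u.HasFiniteSupport) (φ : Site d → ℝ) :
    ∑ᶠ x, lap u x * φ x = ∑ᶠ x, u x * lap φ x := by
  have hL : ∀ i, (fun x => (u (x + Pi.single i 1) - u x) * φ x).HasFiniteSupport ∧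
      (fun x => (u (x - Pi.single i 1) - u x) * φ x).HasFiniteSupport := fun i =>
    ⟨((hu.comp_of_injective (add_left_injective _)).fun_sub hu).fun_mul_left φ,
      ((hu.comp_of_injective sub_left_injective).fun_sub hu).fun_mul_left φ⟩
  have hR : ∀ i, (fun x => u x * (φ (x + Pi.single i 1) - φ x)).HasFiniteSupport ∧
      (fun x => u x * (φ (x - Pi.single i 1) - φ x)).HasFiniteSupport := fun i =>
    ⟨hu.fun_mul_left _, hu.fun_mul_left _⟩
  calc ∑ᶠ x, lap u x * φ x
      = ∑ᶠ x, (1 / (2 * d : ℝ)) * ∑ i, ((u (x + Pi.single i 1) - u x) * φ x +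
          (u (x - Pi.single i 1) - u x) * φ x) := by
        simp only [lap, Finset.sum_mul, add_mul, mul_assoc]
    _ = (1 / (2 * d : ℝ)) * ∑ i, (∑ᶠ x, (u (x + Pi.single i 1) - u x) * φ x +
          ∑ᶠ x, (u (x - Pi.single i 1) - u x) * φ x) := by
        rw [← mul_finsum, finsum_sum_comm _ _ fun i _ => (hL i).1.fun_add (hL i).2]
        simp only [finsum_add_distrib (hL _).1 (hL _).2]
    _ = (1 / (2 * d : ℝ)) * ∑ i, (∑ᶠ x, u x * (φ (x + Pi.single i 1) - φ x) +
          ∑ᶠ x, u x * (φ (x - Pi.single i 1) - φ x)) := by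
        congr 1
        refine Finset.sum_congr rfl fun i _ => ?_
        simp only [sub_eq_add_neg (_ : Site d), finsum_sub_translate_mul hu, neg_neg]
        exact add_comm _ _
    _ = ∑ᶠ x, (1 / (2 * d : ℝ)) * ∑ i, (u x * (φ (x + Pi.single i 1) - φ x) +
          u x * (φ (x - Pi.single i 1) - φ x)) := by
        rw [← mul_finsum, finsum_sum_comm _ _ fun i _ => (hR i).1.fun_add (hR i).2]
        simp only [finsum_add_distrib (hR _).1 (hR _).2]
    _ = ∑ᶠ x, u x * lap φ x := by
        simp only [lap, Finset.mul_sum, mul_add, mul_left_comm (u _)]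

theorem tendsto_lap {ι : Type*} {l : Filter ι} {u : ι → Site d → ℝ} {v : Site d → ℝ}
    (h : ∀ y, Tendsto (fun k => u k y) l (nhds (v y))) (x : Site d) :
    Tendsto (fun k => lap (u k) x) l (nhds (lap v x)) :=
  (tendsto_finsetSum _ fun _ _ =>
    ((h _).sub (h x)).add ((h _).sub (h x))).const_mul _

end Laplacian

section Toppling

variable {d : ℕ} {κ : ℝ} {c : Config d} {x : Site d}

theorem topple_of_not_unstable (h : ¬ Unstable κ c x) : topple κ c x = c := if_neg h

theorem topple_V (h : Unstable κ c x) : (topple κ c x).V = c.V ∪ {y | nbr x y} := by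
  rw [topple, if_pos h]

open Classical in
theorem topple_μ (h : Unstable κ c x) (y : Site d) :
    (topple κ c x).μ y =
      if y = x then 0 else if nbr x y then c.μ y + c.μ x / (2 * d) else c.μ y := by
  rw [topple, if_pos h]

theorem topple_μ_eq_add_lap (hd : 0 < d) (h : Unstable κ c x) (y : Site d) :
    (topple κ c x).μ y = c.μ y + lap (Pi.single x (c.μ x)) y := by
  rw [topple_μ h, lap_single hd]
  split_ifs with hyx <;> simp [hyx]

theorem topple_u (h : Unstable κ c x) : (topple κ c x).u = c.u + Pi.single x (c.μ x) := by
  ext y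
  rw [topple, if_pos h]
  rcases eq_or_ne y x with rfl | hyx <;> simp [*]

theorem Unstable.mem_V (h : Unstable κ c x) : x ∈ c.V := by
  rcases h with ⟨h, _⟩ | ⟨h, _⟩
  exacts [h.1, h.1]

theorem Unstable.pos (hκ : 0 ≤ κ) (h : Unstable κ c x) : 0 < c.μ x := by
  rcases h with ⟨_, h⟩ | ⟨_, h⟩
  exacts [hκ.trans_lt h, h]

end Toppling

theorem _root_.Monotone.exists_forall_subset_of_ncard_le {α : Type*} {s : ℕ → Set α}
    (hs : Monotone s) (hfin : ∀ k, (s k).Finite) {N : ℕ} (hN : ∀ k, (s k).ncard ≤ N) :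
    ∃ K, ∀ k, s k ⊆ s K := by
  have hbdd : BddAbove (Set.range fun k => (s k).ncard) := ⟨N, by rintro _ ⟨k, rfl⟩; exact hN k⟩
  obtain ⟨K, hK⟩ := Nat.sSup_mem (Set.range_nonempty _) hbdd
  refine ⟨K, fun k => ?_⟩
  have : s K = s (max k K) := Set.eq_of_subset_of_ncard_le (hs (le_max_right k K))
    ((le_csSup hbdd ⟨max k K, rfl⟩).trans_eq hK.symm) (hfin _)
  exact this ▸ hs (le_max_left k K)

section Evolution

variable {d : ℕ} {κ : ℝ} {μ0 : Site d → ℝ} {T : ℕ → Site d}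

theorem evolve_succ (k : ℕ) : evolve κ μ0 T (k + 1) = topple κ (evolve κ μ0 T k) (T k) := rfl

theorem evolve_induction {P : Config d → Prop} (h0 : P (evolve κ μ0 T 0))
    (hstep : ∀ k, P (evolve κ μ0 T k) → Unstable κ (evolve κ μ0 T k) (T k) →
      P (topple κ (evolve κ μ0 T k) (T k))) (k : ℕ) : P (evolve κ μ0 T k) := by
  induction k with
  | zero => exact h0
  | succ k ih =>
    rw [evolve_succ]
    by_cases hU : Unstable κ (evolve κ μ0 T k) (T k)
    · exact hstep k ih hU
    · rwa [topple_of_not_unstable hU]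

theorem evolve_V_mono : Monotone fun k => (evolve κ μ0 T k).V := by
  refine monotone_nat_of_le_succ fun k => ?_
  rw [evolve_succ]
  by_cases hU : Unstable κ (evolve κ μ0 T k) (T k)
  · rw [topple_V hU]; exact Set.subset_union_left
  · rw [topple_of_not_unstable hU]

theorem evolve_V_finite (hμ0 : μ0.HasFiniteSupport) (k : ℕ) : (evolve κ μ0 T k).V.Finite :=
  evolve_induction (P := fun c => c.V.Finite) hμ0
    (fun k h hU => by rw [topple_V hU]; exact h.union (setOf_nbr_finite _)) k

theorem evolve_μ_nonneg (hμ0 : ∀ x, 0 ≤ μ0 x) (k : ℕ) (x : Site d) : 0 ≤ (evolve κ μ0 T k).μ x :=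
  evolve_induction (P := fun c => ∀ x, 0 ≤ c.μ x) hμ0 (fun k h hU y => by
    have := h (T k)
    rw [topple_μ hU]
    split_ifs
    exacts [le_rfl, add_nonneg (h y) (by positivity), h y]) k x

theorem support_evolve_μ_subset (k : ℕ) :
    Function.support (evolve κ μ0 T k).μ ⊆ (evolve κ μ0 T k).V :=
  evolve_induction (P := fun c => Function.support c.μ ⊆ c.V) subset_rfl (fun k h hU y hy => by
    rw [topple_V hU]
    rw [Function.mem_support, topple_μ hU] at hy
    split_ifs at hy with h1 h2
    exacts [absurd rfl hy, Or.inr h2, Or.inl (h hy)]) k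

theorem evolve_μ_eq (hd : 0 < d) (k : ℕ) (x : Site d) :
    (evolve κ μ0 T k).μ x = μ0 x + lap (evolve κ μ0 T k).u x :=
  evolve_induction (P := fun c => ∀ x, c.μ x = μ0 x + lap c.u x)
    (fun x => by simp [evolve, lap_const]) (fun k h hU y => by
      rw [topple_μ_eq_add_lap hd hU, topple_u hU, lap_add, h]; ring) k x

theorem evolve_u_mono (hμ0 : ∀ x, 0 ≤ μ0 x) (x : Site d) :
    Monotone fun k => (evolve κ μ0 T k).u x := by
  refine monotone_nat_of_le_succ fun k => ?_
  rw [evolve_succ]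
  by_cases hU : Unstable κ (evolve κ μ0 T k) (T k)
  · rw [topple_u hU, Pi.add_apply, le_add_iff_nonneg_right, Pi.single_apply]
    split_ifs
    exacts [evolve_μ_nonneg hμ0 k _, le_rfl]
  · rw [topple_of_not_unstable hU]

theorem evolve_u_nonneg (hμ0 : ∀ x, 0 ≤ μ0 x) (k : ℕ) (x : Site d) :
    0 ≤ (evolve κ μ0 T k).u x :=
  evolve_u_mono (T := T) (κ := κ) hμ0 x (Nat.zero_le k)

theorem support_evolve_u_subset (k : ℕ) :
    Function.support (evolve κ μ0 T k).u ⊆ intr (evolve κ μ0 T k).V :=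
  evolve_induction (P := fun c => Function.support c.u ⊆ intr c.V) (by simp [evolve])
    (fun k h hU y hy => by
      have hVsub := evolve_V_mono (κ := κ) (μ0 := μ0) (T := T) (Nat.le_succ k)
      rcases eq_or_ne y (T k) with rfl | hy'
      · rw [topple_V hU]
        exact mem_intr_iff.mpr ⟨Or.inl hU.mem_V, fun z hz => Or.inr hz⟩
      · rw [Function.mem_support, topple_u hU, Pi.add_apply, Pi.single_eq_of_ne hy',
          add_zero] at hy
        exact intr_mono hVsub (h hy)) k

theorem lt_evolve_μ_of_evolve_u_eq_zero (hd : 0 < d) (hκ : 0 ≤ κ) (hμ0 : ∀ x, 0 ≤ μ0 x)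
    {k : ℕ} {x : Site d} (hx : x ∈ (evolve κ μ0 T k).V) (hμ0x : μ0 x = 0)
    (hux : (evolve κ μ0 T k).u x = 0) : κ / (2 * d) < (evolve κ μ0 T k).μ x := by
  induction k generalizing x with
  | zero => exact absurd hμ0x hx
  | succ k ih =>
    rw [evolve_succ] at hx hux ⊢
    by_cases hU : Unstable κ (evolve κ μ0 T k) (T k)
    swap
    · rw [topple_of_not_unstable hU] at hx hux ⊢
      exact ih hx hμ0x hux
    rw [topple_u hU, Pi.add_apply, Pi.single_apply] at hux
    rw [topple_μ hU]
    split_ifs at hux ⊢ with hxz hnbr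
    · linarith [evolve_u_nonneg (κ := κ) (T := T) hμ0 k x, hU.pos hκ]
    · rw [add_zero] at hux
      by_cases hxV : x ∈ (evolve κ μ0 T k).V
      · have := evolve_μ_nonneg (κ := κ) (T := T) hμ0 k (T k)
        have := ih hxV hμ0x hux
        have : 0 ≤ (evolve κ μ0 T k).μ (T k) / (2 * d) := by positivity
        linarith
      · have hμx : (evolve κ μ0 T k).μ x = 0 :=
          Function.notMem_support.mp fun h => hxV (support_evolve_μ_subset k h)
        have hκμ : κ < (evolve κ μ0 T k).μ (T k) := by
          rcases hU with ⟨_, h⟩ | ⟨h, _⟩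
          · exact h
          · exact absurd ((mem_intr_iff.mp h).2 x hnbr) hxV
        rw [hμx, zero_add]
        gcongr
    · rw [add_zero] at hux
      rw [topple_V hU] at hx
      exact ih (hx.resolve_right hnbr) hμ0x hux

theorem hasFiniteSupport_evolve_μ (hμ0 : μ0.HasFiniteSupport) (k : ℕ) :
    (evolve κ μ0 T k).μ.HasFiniteSupport :=
  (evolve_V_finite hμ0 k).subset (support_evolve_μ_subset k)

theorem hasFiniteSupport_evolve_u (hμ0 : μ0.HasFiniteSupport) (k : ℕ) :
    (evolve κ μ0 T k).u.HasFiniteSupport :=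
  (evolve_V_finite hμ0 k).subset ((support_evolve_u_subset k).trans Set.sdiff_subset)

theorem finsum_evolve_μ_mul (hd : 0 < d) (hμ0 : μ0.HasFiniteSupport) (k : ℕ) (φ : Site d → ℝ) :
    ∑ᶠ x, (evolve κ μ0 T k).μ x * φ x =
      ∑ᶠ x, μ0 x * φ x + ∑ᶠ x, (evolve κ μ0 T k).u x * lap φ x := by
  have hlap : (fun x => lap (evolve κ μ0 T k).u x * φ x).HasFiniteSupport := by
    have : (fun x => lap (evolve κ μ0 T k).u x * φ x) =
        fun x => ((evolve κ μ0 T k).μ x - μ0 x) * φ x :=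
      funext fun x => by rw [evolve_μ_eq hd]; ring
    rw [this]
    exact ((hasFiniteSupport_evolve_μ hμ0 k).fun_sub hμ0).fun_mul_left φ
  rw [← finsum_lap_mul (hasFiniteSupport_evolve_u hμ0 k), ← finsum_add_distrib
    (hμ0.fun_mul_left φ) hlap]
  exact finsum_congr fun x => by rw [evolve_μ_eq hd]; ring

theorem finsum_evolve_μ (hd : 0 < d) (hμ0 : μ0.HasFiniteSupport) (k : ℕ) :
    ∑ᶠ x, (evolve κ μ0 T k).μ x = ∑ᶠ x, μ0 x := by
  simpa [lap_const] using finsum_evolve_μ_mul (κ := κ) (T := T) hd hμ0 k fun _ => 1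

theorem finsum_evolve_μ_mul_normSq (hd : 0 < d) (hμ0 : μ0.HasFiniteSupport) (k : ℕ) :
    ∑ᶠ x, (evolve κ μ0 T k).μ x * normSq x =
      ∑ᶠ x, μ0 x * normSq x + ∑ᶠ x, (evolve κ μ0 T k).u x := by
  simpa [lap_normSq hd] using finsum_evolve_μ_mul (κ := κ) (T := T) hd hμ0 k normSq

theorem card_mul_le_finsum (hd : 0 < d) (hμ0 : IsMassDist μ0) {k : ℕ} {ε : ℝ}
    {H : Finset (Site d)} (hH : ∀ x ∈ H, ε ≤ (evolve κ μ0 T k).μ x) :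
    H.card * ε ≤ ∑ᶠ x, μ0 x := by
  classical
  set F := (hasFiniteSupport_evolve_μ (κ := κ) (T := T) hμ0.2 k).toFinset
  calc H.card * ε = ∑ x ∈ H, ε := by simp
    _ ≤ ∑ x ∈ H, (evolve κ μ0 T k).μ x := Finset.sum_le_sum hH
    _ ≤ ∑ x ∈ H ∪ F, (evolve κ μ0 T k).μ x :=
        Finset.sum_le_sum_of_subset_of_nonneg Finset.subset_union_left
          fun x _ _ => evolve_μ_nonneg hμ0.1 k x
    _ = ∑ᶠ x, (evolve κ μ0 T k).μ x :=
        (finsum_eq_sum_of_support_subset _ fun x hx =>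
          Finset.mem_union_right _ ((Set.Finite.mem_toFinset _).mpr hx)).symm
    _ = ∑ᶠ x, μ0 x := finsum_evolve_μ hd hμ0.2 k

theorem exists_ncard_evolve_V_le (hd : 2 ≤ d) (hμ0 : IsMassDist μ0) (hκ : 0 < κ) :
    ∃ N, ∀ k, (evolve κ μ0 T k).V.ncard ≤ N := by
  classical
  have hd0 : 0 < d := by omega
  set S := hμ0.2.toFinset
  set n := ⌈2 * d * (∑ᶠ x, μ0 x) / κ⌉₊
  refine ⟨(S.card + n) ^ d, fun k => ?_⟩
  set c := evolve κ μ0 T k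
  have hF := evolve_V_finite (κ := κ) (T := T) hμ0.2 k
  -- never-toppled sites outside `supp μ₀`: each carries mass `> κ / 2d`, and with `supp μ₀`
  -- they cover `∂V_k`
  set H := hF.toFinset.filter fun x => μ0 x = 0 ∧ c.u x = 0
  have hH : H.card ≤ n := by
    have h := card_mul_le_finsum hd0 hμ0 (H := H) fun x hx => by
      simp only [H, Finset.mem_filter, Set.Finite.mem_toFinset] at hx
      exact (lt_evolve_μ_of_evolve_u_eq_zero hd0 hκ.le hμ0.1 hx.1 hx.2.1 hx.2.2).le
    have : (H.card : ℝ) ≤ 2 * d * (∑ᶠ x, μ0 x) / κ := by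
      rw [le_div_iff₀ hκ]
      have : (0 : ℝ) < 2 * d := by positivity
      calc (H.card : ℝ) * κ = H.card * (κ / (2 * d)) * (2 * d) := by field_simp
        _ ≤ (∑ᶠ x, μ0 x) * (2 * d) := by gcongr
        _ = 2 * d * (∑ᶠ x, μ0 x) := by ring
    exact Nat.cast_le.mp (this.trans (Nat.le_ceil _))
  have hbdry : bdry (hF.toFinset : Set (Site d)) ⊆ ↑(S ∪ H) := by
    rw [Set.Finite.coe_toFinset]
    intro x hx
    by_cases h0 : μ0 x = 0
    · have hu : c.u x = 0 := by
        by_contra hu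
        exact (support_evolve_u_subset k hu).2 hx
      simp [H, hx.1, h0, hu]
    · simp [S, h0]
  calc c.V.ncard = hF.toFinset.card := Set.ncard_eq_toFinset_card _ hF
    _ ≤ (S ∪ H).card ^ d := card_le_card_pow_of_bdry_subset hd hbdry
    _ ≤ (S.card + n) ^ d := Nat.pow_le_pow_left ((Finset.card_union_le _ _).trans (by omega)) d

theorem exists_evolve_V_subset (hd : 2 ≤ d) (hμ0 : IsMassDist μ0) (hκ : 0 < κ) :
    ∃ K, ∀ k, (evolve κ μ0 T k).V ⊆ (evolve κ μ0 T K).V := by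
  obtain ⟨N, hN⟩ := exists_ncard_evolve_V_le (T := T) hd hμ0 hκ
  exact evolve_V_mono.exists_forall_subset_of_ncard_le (evolve_V_finite hμ0.2) hN

theorem evolve_u_le (hd : 0 < d) (hμ0 : IsMassDist μ0) {W : Set (Site d)} (hW : W.Finite)
    (hV : ∀ k, (evolve κ μ0 T k).V ⊆ W) : ∃ C, ∀ k x, (evolve κ μ0 T k).u x ≤ C := by
  obtain ⟨R, hR⟩ := (hW.image normSq).bddAbove
  refine ⟨R * ∑ᶠ x, μ0 x, fun k x => ?_⟩
  have hμ := hasFiniteSupport_evolve_μ (κ := κ) (T := T) hμ0.2 k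
  have hnormSq : ∀ y, (evolve κ μ0 T k).μ y * normSq y ≤ R * (evolve κ μ0 T k).μ y := by
    intro y
    by_cases hy : (evolve κ μ0 T k).μ y = 0
    · simp [hy]
    · rw [mul_comm]
      exact mul_le_mul_of_nonneg_right (hR ⟨y, hV k (support_evolve_μ_subset k hy), rfl⟩)
        (evolve_μ_nonneg hμ0.1 k y)
  have := finsum_nonneg fun y => mul_nonneg (hμ0.1 y) (normSq_nonneg y)
  calc (evolve κ μ0 T k).u x ≤ ∑ᶠ y, (evolve κ μ0 T k).u y :=
        single_le_finsum x (hasFiniteSupport_evolve_u hμ0.2 k) (evolve_u_nonneg hμ0.1 k)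
    _ ≤ ∑ᶠ y, (evolve κ μ0 T k).μ y * normSq y := by
        rw [finsum_evolve_μ_mul_normSq hd hμ0.2]; linarith
    _ ≤ ∑ᶠ y, R * (evolve κ μ0 T k).μ y :=
        finsum_le_finsum' (hμ.fun_mul_left _) (hμ.fun_mul_right _) hnormSq
    _ = R * ∑ᶠ x, μ0 x := by rw [← mul_finsum, finsum_evolve_μ hd hμ0.2]

end Evolution

section Stabilization

variable {d : ℕ} {κ : ℝ} {μ0 : Site d → ℝ} {T : ℕ → Site d}

theorem evolve_le_of_isStabilizingPair (hd : 0 < d) (hμ0 : ∀ x, 0 ≤ μ0 x) {V : Set (Site d)}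
    {u : Site d → ℝ} (h : IsStabilizingPair μ0 κ V u) (k : ℕ) :
    (evolve κ μ0 T k).V ⊆ V ∧ ∀ x, (evolve κ μ0 T k).u x ≤ u x := by
  obtain ⟨-, hsupp, hu0, -, hint, hbdry, hflux⟩ := h
  refine evolve_induction (P := fun c => c.V ⊆ V ∧ ∀ x, c.u x ≤ u x) ⟨hsupp, hu0⟩
    (fun k ⟨hV, hu⟩ hU => ?_) k
  set c := evolve κ μ0 T k
  set x := T k
  have hμx : c.μ x ≤ μ0 x + lap u x + (u x - c.u x) := by
    have := neg_le_lap hd (w := u - c.u) (fun y => sub_nonneg.mpr (hu y)) x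
    rw [lap_sub, Pi.sub_apply] at this
    rw [evolve_μ_eq hd]
    linarith
  have hxint : x ∈ intr V := by
    refine ⟨hV hU.mem_V, fun hxb => ?_⟩
    rcases hU with ⟨_, hκμ⟩ | ⟨hxi, _⟩
    · linarith [hflux x hxb, hbdry x hxb, evolve_u_nonneg (κ := κ) (T := T) hμ0 k x]
    · obtain ⟨_, y, hxy, hyV⟩ := hxb
      exact hyV (hV ((mem_intr_iff.mp hxi).2 y hxy))
  refine ⟨?_, fun y => ?_⟩
  · rw [topple_V hU]
    exact Set.union_subset hV fun y hy => (mem_intr_iff.mp hxint).2 y hy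
  · rw [topple_u hU, Pi.add_apply, Pi.single_apply]
    split_ifs with hyx
    · rw [hyx]
      linarith [hint x hxint]
    · simpa using hu y

noncomputable def finalOdometer (κ : ℝ) (μ0 : Site d → ℝ) (T : ℕ → Site d) (x : Site d) : ℝ :=
  ⨆ k, (evolve κ μ0 T k).u x

theorem tendsto_evolve_u (hμ0 : ∀ x, 0 ≤ μ0 x) {C : ℝ} (hC : ∀ k x, (evolve κ μ0 T k).u x ≤ C)
    (x : Site d) :
    Tendsto (fun k => (evolve κ μ0 T k).u x) atTop (nhds (finalOdometer κ μ0 T x)) :=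
  tendsto_atTop_ciSup (evolve_u_mono hμ0 x) ⟨C, by rintro _ ⟨k, rfl⟩; exact hC k x⟩

theorem tendsto_evolve_μ (hd : 0 < d) (hμ0 : ∀ x, 0 ≤ μ0 x) {C : ℝ}
    (hC : ∀ k x, (evolve κ μ0 T k).u x ≤ C) (x : Site d) :
    Tendsto (fun k => (evolve κ μ0 T k).μ x) atTop
      (nhds (μ0 x + lap (finalOdometer κ μ0 T) x)) := by
  simp only [evolve_μ_eq hd]
  exact tendsto_const_nhds.add (tendsto_lap (tendsto_evolve_u hμ0 hC) x)

theorem limit_le_of_eventually_unstable (hd : 0 < d) (hμ0 : ∀ x, 0 ≤ μ0 x) (hT : Infinitive T)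
    {C : ℝ} (hC : ∀ k x, (evolve κ μ0 T k).u x ≤ C) {x : Site d} {ε : ℝ} (hε : 0 < ε)
    (h : ∀ᶠ k in atTop, ε < (evolve κ μ0 T k).μ x → Unstable κ (evolve κ μ0 T k) x) :
    μ0 x + lap (finalOdometer κ μ0 T) x ≤ ε := by
  by_contra! hlt
  have hu := tendsto_evolve_u hμ0 hC x
  -- a convergent sequence has increments eventually below `ε`, but `x` topples infinitely often
  -- with mass above `ε`
  have hinc : ∀ᶠ k in atTop, (evolve κ μ0 T (k + 1)).u x - (evolve κ μ0 T k).u x < ε := by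
    have := (hu.comp (tendsto_add_atTop_nat 1)).sub hu
    rw [sub_self] at this
    exact this.eventually (gt_mem_nhds hε)
  have hμ := (tendsto_evolve_μ hd hμ0 hC x).eventually (lt_mem_nhds hlt)
  obtain ⟨k, hTk, hUk, hμk, hinck⟩ :=
    ((Nat.frequently_atTop_iff_infinite.mpr (hT x)).and_eventually (h.and (hμ.and hinc))).exists
  rw [evolve_succ, show T k = x from hTk, topple_u (hUk hμk), Pi.add_apply,
    Pi.single_eq_same] at hinck
  linarith

theorem isStabilizingPair_finalOdometer (hd : 0 < d) (hμ0 : IsMassDist μ0) (hκ : 0 < κ)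
    (hT : Infinitive T) {K : ℕ} (hK : ∀ k, (evolve κ μ0 T k).V ⊆ (evolve κ μ0 T K).V) :
    IsStabilizingPair μ0 κ (evolve κ μ0 T K).V (finalOdometer κ μ0 T) := by
  obtain ⟨C, hC⟩ := evolve_u_le hd hμ0 (evolve_V_finite hμ0.2 K) hK
  have hVK : ∀ k ≥ K, (evolve κ μ0 T k).V = (evolve κ μ0 T K).V := fun k hk =>
    (hK k).antisymm (evolve_V_mono hk)
  have hzero : ∀ x ∉ intr (evolve κ μ0 T K).V, finalOdometer κ μ0 T x = 0 := by
    intro x hx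
    have : ∀ k, (evolve κ μ0 T k).u x = 0 := fun k => by
      by_contra h
      exact hx (intr_mono (hK k) (support_evolve_u_subset k h))
    simp [finalOdometer, this]
  refine ⟨evolve_V_finite hμ0.2 K, evolve_V_mono (Nat.zero_le K), fun x => ?_, hzero,
    fun x hx => ?_, fun x hx => hzero x fun h => h.2 hx, fun x hx => ?_⟩
  · exact ge_of_tendsto' (tendsto_evolve_u hμ0.1 hC x) (evolve_u_nonneg hμ0.1 · x)
  · have hle : μ0 x + lap (finalOdometer κ μ0 T) x ≤ 0 :=
      le_of_forall_gt_imp_ge_of_dense fun ε hε =>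
        limit_le_of_eventually_unstable hd hμ0.1 hT hC hε (eventually_atTop.mpr
          ⟨K, fun k hk hμk => Or.inr ⟨hVK k hk ▸ hx, hε.trans hμk⟩⟩)
    have hge := ge_of_tendsto' (tendsto_evolve_μ hd hμ0.1 hC x) (evolve_μ_nonneg hμ0.1 · x)
    linarith
  · exact limit_le_of_eventually_unstable hd hμ0.1 hT hC hκ (eventually_atTop.mpr
      ⟨K, fun k hk hμk => Or.inl ⟨hVK k hk ▸ hx, hμk⟩⟩)

end Stabilization

/-- Minimality principle. Let `μ₀` be a mass distribution on `ℤ^d`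
with finite support and `κ > 0`. Let `T` be any infinitive toppling sequence for
`BS(μ₀, κ)` and let `V₀ = ⋃_k V_k` be the final set of visited sites along `T`. Then
`V₀` equals the intersection of all sets `V ⊆ ℤ^d` for which there exists a function
`u` such that `(V, u)` is a stabilizing pair for `BS(μ₀, κ)`. -/
theorem stmt5 {d : ℕ} (hd : 2 ≤ d) (μ0 : Site d → ℝ) (hμ0 : IsMassDist μ0)
    (κ : ℝ) (hκ : 0 < κ) (T : ℕ → Site d) (hT : Infinitive T) :
    (⋃ k : ℕ, (evolve κ μ0 T k).V) =
      ⋂₀ {V : Set (Site d) | ∃ u : Site d → ℝ, IsStabilizingPair μ0 κ V u} := by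
  have hd0 : 0 < d := by omega
  obtain ⟨K, hK⟩ := exists_evolve_V_subset hd hμ0 hκ
  rw [(Set.iUnion_subset hK).antisymm (Set.subset_iUnion (fun k => (evolve κ μ0 T k).V) K)]
  refine (Set.subset_sInter ?_).antisymm
    (Set.sInter_subset_of_mem ⟨_, isStabilizingPair_finalOdometer hd0 hμ0 hκ hT hK⟩)
  rintro V ⟨u, hVu⟩
  exact (evolve_le_of_isStabilizingPair hd0 hμ0.1 hVu K).1

end Sandpile
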